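/- arXiv:1807.00744 — 2 statements merged into one kernel-verified Lean document; each statement's English description precedes it below -/
import Mathlib

section
/- Let J be a junction tree over factors {φ_c} assigned to its nodes (each factor's scope contained in its node's cluster), satisfying the running intersection property. Fix an edge i–j with separator S = C(i)∩C(j), splitting J into components T_i and T_j. Then the sum over all assignments to variables occurring only in T_i of the product of factors assigned to nodes in T_i depends only on the assignment restricted to S. -/
open Finset
open scoped Classical

/-! An edge `i – j` of a tree is a bridge, so every path from the `i`-side to the `j`-side
crosses it, and by the running intersection property a variable shared by clusters on both
sides lies in the separator `C i ∩ C j`. Hence every variable of the `i`-side factors that is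
not summed out lies in the separator, where the two assignments agree; replacing the fixed
coordinates of one assignment by those of the other matches the two sums term by term. -/

theorem SimpleGraph.IsBridge.mem_edges_of_reachable_deleteEdges {V : Type*}
    {G : SimpleGraph V} {i j k k' : V} (h : G.IsBridge s(i, j))
    (hk : (G.deleteEdges {s(i, j)}).Reachable k i)
    (hk' : (G.deleteEdges {s(i, j)}).Reachable k' j) (p : G.Walk k k') :
    s(i, j) ∈ p.edges := by
  by_contra hp
  exact isBridge_iff.mp h (hk.symm.trans ⟨p.toDeleteEdge _ hp⟩ |>.trans hk')

def RunningIntersection {V Var : Type*} (G : SimpleGraph V) (C : V → Set Var) : Prop :=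
  ∀ (a b k : V) (p : G.Walk a b), p.IsPath → k ∈ p.support → C a ∩ C b ⊆ C k

theorem mem_separator_of_mem_of_reachable_deleteEdges {V Var : Type*} {G : SimpleGraph V}
    (hT : G.IsTree) {C : V → Set Var} (hC : RunningIntersection G C) {i j k k' : V}
    (hij : G.Adj i j) (hk : (G.deleteEdges {s(i, j)}).Reachable k i)
    (hk' : (G.deleteEdges {s(i, j)}).Reachable k' j) {x : Var} (hx : x ∈ C k)
    (hx' : x ∈ C k') : x ∈ C i ∩ C j := by
  obtain ⟨p, hp⟩ := (hT.existsUnique_path k k').exists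
  have hbridge : G.IsBridge s(i, j) :=
    SimpleGraph.isAcyclic_iff_forall_adj_isBridge.mp hT.isAcyclic hij
  have hij_mem := hbridge.mem_edges_of_reachable_deleteEdges hk hk' p
  exact ⟨hC k k' i p hp (p.fst_mem_support_of_mem_edges hij_mem) ⟨hx, hx'⟩,
    hC k k' j p hp (p.snd_mem_support_of_mem_edges hij_mem) ⟨hx, hx'⟩⟩

section FixedOutside

variable {ι : Type*} [Fintype ι] {β : ι → Type*} [∀ x, Fintype (β x)]

noncomputable def fixedOutside (U : Set ι) (a : ∀ x, β x) : Finset (∀ x, β x) :=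
  univ.filter fun b => ∀ x, x ∉ U → b x = a x

theorem sum_fixedOutside_congr {M : Type*} [AddCommMonoid M] {U D : Set ι}
    {f : (∀ x, β x) → M} (hf : ∀ b b', (∀ x ∈ D, b x = b' x) → f b = f b')
    {a a' : ∀ x, β x} (ha : ∀ x ∈ D, x ∉ U → a x = a' x) :
    ∑ b ∈ fixedOutside U a, f b = ∑ b ∈ fixedOutside U a', f b := by
  have piecewise_mem {c : ∀ x, β x} (b : ∀ x, β x) : U.piecewise b c ∈ fixedOutside U c := by
    simp only [fixedOutside, mem_filter, mem_univ, true_and]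
    exact fun x hx => U.piecewise_eq_of_notMem _ _ hx
  have piecewise_self {c : ∀ x, β x} (b : ∀ x, β x) (hb : b ∈ fixedOutside U c)
      (c' : ∀ x, β x) : U.piecewise (U.piecewise b c') c = b := by
    simp only [fixedOutside, mem_filter, mem_univ, true_and] at hb
    funext x
    by_cases hx : x ∈ U
    · simp [hx]
    · simp [hx, hb x hx]
  refine sum_nbij' (U.piecewise · a') (U.piecewise · a) (fun b _ => piecewise_mem b)
    (fun b _ => piecewise_mem b) (fun b hb => piecewise_self b hb a')
    (fun b hb => piecewise_self b hb a) fun b hb => hf _ _ fun x hxD => ?_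
  simp only [fixedOutside, mem_filter, mem_univ, true_and] at hb
  by_cases hx : x ∈ U
  · simp [hx]
  · simp [hx, hb x hx, ha x hxD hx]

end FixedOutside

/-- The message over a separator is well-defined: in a junction tree with factors
assigned to nodes (scopes within clusters), for an edge i–j, summing the product of
the factors of i's component T_i over the variables occurring only in T_i yields a
function depending only on the assignment restricted to the separator C i ∩ C j. -/
theorem stmt_9 {V Var : Type*} [Fintype V] [Fintype Var] (G : SimpleGraph V)
    (hT : G.IsTree) (C : V → Set Var)
    (RIP : ∀ (a b k : V) (p : G.Walk a b), p.IsPath → k ∈ p.support → C a ∩ C b ⊆ C k)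
    (Val : Var → Type*) [∀ v, Fintype (Val v)]
    (φ : V → (∀ v, Val v) → NNReal)
    (hscope : ∀ (k : V) (a b : ∀ v, Val v), (∀ v ∈ C k, a v = b v) → φ k a = φ k b)
    (i j : V) (hij : G.Adj i j)
    (a a' : ∀ v, Val v) (hS : ∀ x ∈ C i ∩ C j, a x = a' x) :
    ∑ b ∈ Finset.univ.filter (fun b : ∀ v, Val v =>
          ∀ x : Var, ¬((∃ k, (G.deleteEdges {s(i, j)}).Reachable k i ∧ x ∈ C k) ∧
              ∀ k, (G.deleteEdges {s(i, j)}).Reachable k j → x ∉ C k) → b x = a x),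
        ∏ k ∈ Finset.univ.filter (fun k => (G.deleteEdges {s(i, j)}).Reachable k i),
          φ k b
      = ∑ b ∈ Finset.univ.filter (fun b : ∀ v, Val v =>
          ∀ x : Var, ¬((∃ k, (G.deleteEdges {s(i, j)}).Reachable k i ∧ x ∈ C k) ∧
              ∀ k, (G.deleteEdges {s(i, j)}).Reachable k j → x ∉ C k) → b x = a' x),
        ∏ k ∈ Finset.univ.filter (fun k => (G.deleteEdges {s(i, j)}).Reachable k i),
          φ k b := by
  set H := G.deleteEdges {s(i, j)}
  have hfactors : ∀ b b' : ∀ v, Val v, (∀ x ∈ ⋃ k ∈ {k | H.Reachable k i}, C k, b x = b' x) →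
      ∏ k ∈ univ.filter (fun k => H.Reachable k i), φ k b =
        ∏ k ∈ univ.filter (fun k => H.Reachable k i), φ k b' :=
    fun b b' hbb' => prod_congr rfl fun k hk => hscope k b b' fun x hx =>
      hbb' x (Set.mem_biUnion (by simpa using hk) hx)
  have hsep : ∀ x ∈ ⋃ k ∈ {k | H.Reachable k i}, C k,
      x ∉ {x | (∃ k, H.Reachable k i ∧ x ∈ C k) ∧ ∀ k, H.Reachable k j → x ∉ C k} →
        a x = a' x := by
    simp only [Set.mem_iUnion, Set.mem_ofPred_eq, exists_prop]
    rintro x ⟨k, hk, hx⟩ hx_free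
    obtain ⟨k', hk', hx'⟩ : ∃ k', H.Reachable k' j ∧ x ∈ C k' := by
      by_contra! h
      exact hx_free ⟨⟨k, hk, hx⟩, h⟩
    exact hS x (mem_separator_of_mem_of_reachable_deleteEdges hT RIP hij hk hk' hx hx')
  -- the filters agree with `fixedOutside` up to their `Decidable` instances
  convert sum_fixedOutside_congr hfactors hsep using 2 <;> unfold fixedOutside <;> congr
end

section
/- In any tree, contracting an edge (merging two adjacent nodes into one whose cluster is the union of the two clusters, i.e., parcluster fusion) preserves the junction tree properties: the result is a tree, every factor scope is still contained in some cluster, and the running intersection property is preserved. -/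
/-!
Let `m` send `j` to `i` and fix every other node. Adjacent nodes of the tree go to equal or
adjacent nodes of the fused graph, every fused edge lifts to a tree edge, and the fibres of `m`
(`{i, j}` and singletons) are connected. Hence connectivity passes forward along `m`, and
reachability in the fused graph with an edge removed pulls back to reachability in the tree with
the lifted edge removed, so every fused edge is a bridge. In a tree, the running intersection
property says that the nodes whose cluster contains a given variable form a connected set; the
fused cluster of a node is the union of the clusters of its fibre, so these sets for the fused
tree are the images under `m` of those for the original tree, and stay connected.
-/

open scoped Classical

namespace SimpleGraph

variable {V W α : Type*} {G : SimpleGraph V} {G' : SimpleGraph W}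

theorem Reachable.map_of_forall_adj {f : V → W}
    (hf : ∀ ⦃u v⦄, G.Adj u v → f u = f v ∨ G'.Adj (f u) (f v)) {u v : V}
    (h : G.Reachable u v) : G'.Reachable (f u) (f v) := by
  obtain ⟨p⟩ := h
  induction p with
  | nil => rfl
  | cons hadj _ ih => exact (hf hadj).elim (· ▸ ih) fun h' => h'.reachable.trans ih

theorem Preconnected.map_of_forall_adj {f : V → W} (hG : G.Preconnected)
    (hf : ∀ ⦃u v⦄, G.Adj u v → f u = f v ∨ G'.Adj (f u) (f v)) (hsurj : f.Surjective) :
    G'.Preconnected := by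
  intro a b
  obtain ⟨u, rfl⟩ := hsurj a
  obtain ⟨v, rfl⟩ := hsurj b
  exact (hG u v).map_of_forall_adj hf

theorem Preconnected.induce_image {f : V → W}
    (hf : ∀ ⦃u v⦄, G.Adj u v → f u = f v ∨ G'.Adj (f u) (f v)) {s : Set V}
    (hs : (G.induce s).Preconnected) : (G'.induce (f '' s)).Preconnected := by
  refine hs.map_of_forall_adj (f := Set.imageFactorization f s) (fun u v huv => ?_)
    Set.imageFactorization_surjective
  rcases hf (comap_adj.1 huv) with h | h
  · exact Or.inl (Subtype.ext h)
  · exact Or.inr h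

theorem Reachable.of_map {f : V → W} (hfib : ∀ ⦃u v⦄, f u = f v → G.Reachable u v)
    (hlift : ∀ ⦃a b⦄, G'.Adj a b → ∃ u v, f u = a ∧ f v = b ∧ G.Adj u v) {u v : V}
    (h : G'.Reachable (f u) (f v)) : G.Reachable u v := by
  obtain ⟨p⟩ := h
  suffices ∀ a b (p : G'.Walk a b) u v, f u = a → f v = b → G.Reachable u v from
    this _ _ p u v rfl rfl
  intro a b p
  induction p with
  | nil => exact fun u v hu hv => hfib (hu.trans hv.symm)
  | cons hadj _ ih =>
    intro u v hu hv
    obtain ⟨x, y, hx, hy, hxy⟩ := hlift hadj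
    exact (hfib (hu.trans hx.symm)).trans (hxy.reachable.trans (ih y v hy hv))

/-- A reachability in `G'` avoiding the edge `f u - f v` lifts to one in `G` avoiding `u - v`,
since the fibres are connected through edges that `f` collapses. -/
theorem IsAcyclic.of_preconnected_fibers (hG : G.IsAcyclic) (f : V → W)
    (hfib : ∀ a, (G.induce (f ⁻¹' {a})).Preconnected)
    (hlift : ∀ ⦃a b⦄, G'.Adj a b → ∃ u v, f u = a ∧ f v = b ∧ G.Adj u v) : G'.IsAcyclic := by
  rw [isAcyclic_iff_forall_adj_isBridge]
  intro a b hab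
  obtain ⟨u, v, rfl, rfl, huv⟩ := hlift hab
  have hne : f u ≠ f v := hab.ne
  refine isBridge_iff.2 fun hreach => isBridge_iff.1 (isAcyclic_iff_forall_adj_isBridge.1 hG huv)
    (hreach.of_map (fun x y hxy => ?_) (fun c d hcd => ?_))
  · let incl : G.induce (f ⁻¹' {f x}) →g G.deleteEdges {s(u, v)} :=
      ⟨Subtype.val, fun {p q} hpq => deleteEdges_adj.2 ⟨hpq, fun he => hne ?_⟩⟩
    · exact (hfib (f x) ⟨x, rfl⟩ ⟨y, hxy.symm⟩).map incl
    · have hpq := congrArg (Sym2.map f) (Set.mem_singleton_iff.1 he)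
      rw [Sym2.map_mk, Sym2.map_mk, p.2, q.2, Sym2.eq_iff] at hpq
      rcases hpq with ⟨h₁, h₂⟩ | ⟨h₁, h₂⟩ <;> rw [← h₁, h₂]
  · obtain ⟨hcd, hcd'⟩ := deleteEdges_adj.1 hcd
    obtain ⟨x, y, rfl, rfl, hxy⟩ := hlift hcd
    refine ⟨x, y, rfl, rfl, deleteEdges_adj.2 ⟨hxy, fun he => hcd' ?_⟩⟩
    rw [Set.mem_singleton_iff, ← Sym2.map_mk, ← Sym2.map_mk, Set.mem_singleton_iff.1 he]

def RunningIntersection (G : SimpleGraph V) (C : V → Set α) : Prop :=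
  ∀ (a b k : V) (p : G.Walk a b), p.IsPath → k ∈ p.support → C a ∩ C b ⊆ C k

theorem RunningIntersection.preconnected_induce {C : V → Set α} (hG : G.Preconnected)
    (h : G.RunningIntersection C) (x : α) : (G.induce {v | x ∈ C v}).Preconnected := by
  rintro ⟨u, hu⟩ ⟨v, hv⟩
  obtain ⟨p, hp⟩ := (hG u v).exists_isPath
  exact ⟨p.induce _ fun k hk => h u v k p hp hk ⟨hu, hv⟩⟩

theorem runningIntersection_of_preconnected_induce {C : V → Set α} (hG : G.IsAcyclic)
    (h : ∀ x, (G.induce {v | x ∈ C v}).Preconnected) : G.RunningIntersection C := by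
  intro a b k p hp hk x hx
  obtain ⟨q⟩ := h x ⟨a, hx.1⟩ ⟨b, hx.2⟩
  let r : G.Walk a b := q.map (Embedding.induce _).toHom
  have hr : ∀ k ∈ r.support, x ∈ C k := by
    intro k hk
    obtain ⟨y, -, rfl⟩ := List.mem_map.1 ((Walk.support_map _ q).symm ▸ hk :)
    exact y.2
  have hpr : p = r.bypass :=
    congrArg Subtype.val ((hG.subsingleton_path a b).elim ⟨p, hp⟩ ⟨r.bypass, r.bypass_isPath⟩)
  exact hr k (r.support_bypass_subset_support (hpr ▸ hk))

theorem RunningIntersection.of_map {f : V → W}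
    {C : V → Set α} {C' : W → Set α} (hG : G.Preconnected) (hG' : G'.IsAcyclic)
    (hf : ∀ ⦃u v⦄, G.Adj u v → f u = f v ∨ G'.Adj (f u) (f v))
    (hC' : ∀ a, C' a = ⋃ v ∈ f ⁻¹' {a}, C v) (h : G.RunningIntersection C) :
    G'.RunningIntersection C' := by
  refine runningIntersection_of_preconnected_induce hG' fun x => ?_
  have himage : {a | x ∈ C' a} = f '' {v | x ∈ C v} := by
    ext a
    simp [hC', and_comm]
  rw [himage]
  exact (h.preconnected_induce hG x).induce_image hf

section Fusion

variable {j : V}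

noncomputable def mergeInto (i : {x : V // x ≠ j}) (v : V) : {x : V // x ≠ j} :=
  if h : v = j then i else ⟨v, h⟩

theorem mergeInto_self (i : {x : V // x ≠ j}) : mergeInto i j = i := dif_pos rfl

theorem mergeInto_of_ne (i : {x : V // x ≠ j}) {v : V} (hv : v ≠ j) :
    mergeInto i v = ⟨v, hv⟩ := dif_neg hv

theorem mergeInto_eq_iff {i a : {x : V // x ≠ j}} {v : V} :
    mergeInto i v = a ↔ v = a.1 ∨ (v = j ∧ a = i) := by
  by_cases hv : v = j
  · subst hv
    simp [mergeInto_self, a.2.symm, eq_comm]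
  · simp [mergeInto_of_ne i hv, hv, Subtype.ext_iff]

theorem iUnion_mergeInto_preimage (C : V → Set α) (i a : {x : V // x ≠ j}) :
    ⋃ v ∈ mergeInto i ⁻¹' {a}, C v = if a.1 = i.1 then C i.1 ∪ C j else C a.1 := by
  ext x
  split_ifs with ha
  · obtain rfl : a = i := Subtype.ext ha
    simp [mergeInto_eq_iff]
  · have hai : a ≠ i := fun h => ha (congrArg Subtype.val h)
    simp [mergeInto_eq_iff, hai]

theorem preconnected_induce_mergeInto_preimage {i : {x : V // x ≠ j}} (hij : G.Adj i j)
    (a : {x : V // x ≠ j}) : (G.induce (mergeInto i ⁻¹' {a})).Preconnected := by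
  suffices h : ∀ w (hw : w ∈ mergeInto i ⁻¹' {a}),
      (G.induce (mergeInto i ⁻¹' {a})).Reachable ⟨a, mergeInto_of_ne i a.2⟩ ⟨w, hw⟩ from
    fun u v => (h u u.2).symm.trans (h v v.2)
  intro w hw
  rcases mergeInto_eq_iff.1 hw with rfl | ⟨rfl, rfl⟩
  · rfl
  · exact (induce_adj.2 hij).reachable

/-- `G'` is `G` with the node `j` merged into the node `i`. -/
def IsFusion (G : SimpleGraph V) (i j : V) (G' : SimpleGraph {x : V // x ≠ j}) : Prop :=
  ∀ a b : {x : V // x ≠ j}, G'.Adj a b ↔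
    (a ≠ b ∧ (G.Adj a b ∨ (a.1 = i ∧ G.Adj j b) ∨ (b.1 = i ∧ G.Adj a j)))

variable {i : {x : V // x ≠ j}} {G' : SimpleGraph {x : V // x ≠ j}}

theorem IsFusion.adj_mergeInto (h : IsFusion G i j G') ⦃u v : V⦄ (huv : G.Adj u v) :
    mergeInto i u = mergeInto i v ∨ G'.Adj (mergeInto i u) (mergeInto i v) := by
  rw [or_iff_not_imp_left, h]
  refine fun hne => ⟨hne, ?_⟩
  by_cases hu : u = j <;> by_cases hv : v = j
  · exact absurd (hu.trans hv.symm) huv.ne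
  · subst hu
    exact Or.inr (Or.inl ⟨by rw [mergeInto_self], by rwa [mergeInto_of_ne i hv]⟩)
  · subst hv
    exact Or.inr (Or.inr ⟨by rw [mergeInto_self], by rwa [mergeInto_of_ne i hu]⟩)
  · rw [mergeInto_of_ne i hu, mergeInto_of_ne i hv]
    exact Or.inl huv

theorem IsFusion.exists_adj_of_adj (h : IsFusion G i j G') ⦃a b : {x : V // x ≠ j}⦄
    (hab : G'.Adj a b) : ∃ u v, mergeInto i u = a ∧ mergeInto i v = b ∧ G.Adj u v := by
  obtain ⟨-, hab | ⟨ha, hjb⟩ | ⟨hb, haj⟩⟩ := (h a b).1 hab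
  · exact ⟨a, b, mergeInto_of_ne i a.2, mergeInto_of_ne i b.2, hab⟩
  · exact ⟨j, b, (mergeInto_self i).trans (Subtype.ext ha.symm), mergeInto_of_ne i b.2, hjb⟩
  · exact ⟨a, j, mergeInto_of_ne i a.2, (mergeInto_self i).trans (Subtype.ext hb.symm), haj⟩

theorem IsFusion.isTree (h : IsFusion G i j G') (hij : G.Adj i j) (hT : G.IsTree) :
    G'.IsTree where
  connected := (connected_iff _).2
    ⟨hT.connected.preconnected.map_of_forall_adj h.adj_mergeInto
      fun a => ⟨a, mergeInto_of_ne i a.2⟩, ⟨i⟩⟩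
  isAcyclic := hT.isAcyclic.of_preconnected_fibers (mergeInto i)
    (preconnected_induce_mergeInto_preimage hij) h.exists_adj_of_adj

end Fusion

end SimpleGraph

/-- Parcluster fusion: contracting an edge i–j of a junction tree (merging j into i,
the merged node getting cluster C i ∪ C j and inheriting all other edges) yields a tree
in which every factor scope is still contained in some cluster and the running
intersection property is preserved. The contracted graph is modelled on {x // x ≠ j}. -/
theorem stmt_16 {V Var ι : Type*} (G : SimpleGraph V) (hT : G.IsTree)
    (C : V → Set Var)
    (RIP : ∀ (a b k : V) (p : G.Walk a b), p.IsPath → k ∈ p.support → C a ∩ C b ⊆ C k)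
    (S : ι → Set Var) (hassign : ∀ f : ι, ∃ k : V, S f ⊆ C k)
    (i j : V) (hij : G.Adj i j)
    (G' : SimpleGraph {x : V // x ≠ j})
    (hG' : ∀ a b : {x : V // x ≠ j}, G'.Adj a b ↔
      (a ≠ b ∧ (G.Adj a b ∨ (a.1 = i ∧ G.Adj j b) ∨ (b.1 = i ∧ G.Adj a j))))
    (C' : {x : V // x ≠ j} → Set Var)
    (hC' : ∀ a : {x : V // x ≠ j}, C' a = if a.1 = i then C i ∪ C j else C a.1) :
    G'.IsTree ∧ (∀ f : ι, ∃ k, S f ⊆ C' k) ∧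
      (∀ (a b k : {x : V // x ≠ j}) (p : G'.Walk a b), p.IsPath → k ∈ p.support →
        C' a ∩ C' b ⊆ C' k) := by
  let i' : {x : V // x ≠ j} := ⟨i, hij.ne⟩
  have hfusion : SimpleGraph.IsFusion G i' j G' := hG'
  have hunion : ∀ a, C' a = ⋃ v ∈ SimpleGraph.mergeInto i' ⁻¹' {a}, C v := fun a =>
    (hC' a).trans (SimpleGraph.iUnion_mergeInto_preimage C i' a).symm
  have htree : G'.IsTree := hfusion.isTree hij hT
  refine ⟨htree, fun f => ?_, ?_⟩
  · obtain ⟨k, hk⟩ := hassign f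
    exact ⟨SimpleGraph.mergeInto i' k, (hunion _).symm ▸ hk.trans (Set.subset_biUnion_of_mem rfl)⟩
  · exact SimpleGraph.RunningIntersection.of_map hT.connected.preconnected htree.isAcyclic
      hfusion.adj_mergeInto hunion RIP
end
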